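/- Suppose ℓ ≤ n < 2ℓ and x, x' are distinct q-ary words of length n with identical ℓ-gram profile vectors. Then x and x' are root-conjugates and the minimum period π(x) divides n−ℓ+1. -/

import Mathlib

attribute [local instance] Classical.propDecidable

/-- `r` is a period of the word `x : Fin n → Fin q`. -/
def IsPeriod {q n : ℕ} (x : Fin n → Fin q) (r : ℕ) : Prop :=
  0 < r ∧ ∀ i : ℕ, ∀ h : i + r < n, x ⟨i, by omega⟩ = x ⟨i + r, h⟩

/-- The minimum period `π(x)` of a word. -/
noncomputable def minPeriod {q n : ℕ} (x : Fin n → Fin q) : ℕ :=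
  sInf {r | IsPeriod x r}

/-- The ℓ-gram profile vector of `x`. -/
noncomputable def profileVec (q n ℓ : ℕ) (x : Fin n → Fin q) : (Fin ℓ → Fin q) → ℕ :=
  fun z => ((Finset.range (n + 1 - ℓ)).filter
    (fun i => ∀ k : Fin ℓ, ∀ h : i + k.val < n, x ⟨i + k.val, h⟩ = z k)).card

/-!
Write `ℓ = e + 1` and `m = n - ℓ + 1`, so that `n = m + e` and `m ≤ ℓ`. The prefixes and the
suffixes of the `ℓ`-grams of a word are its `e`-grams, missing the last one and the first one
respectively; hence equal `ℓ`-gram multisets give `{first x, last x'} = {first x', last x}` as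
multisets of `e`-grams. If `x` and `x'` shared their first and their last `e`-gram they would be
equal (when `n = 2ℓ - 1` the middle letter is recovered from the last letters of the `ℓ`-grams), so
each word has equal first and last `e`-grams, that is, period `m`. As `2m ≤ n + 1`, the weak
Fine–Wilf theorem makes `π(x)` divide `m`. The first `ℓ`-gram of `x'` occurs in `x` at some `s`, and
the periods `m` of `x'` and `π(x)` of `x` give `x'ⱼ = x_{(j + s) mod π(x)}` for all `j`. Thus `π(x)`
is a period of `x'`, and by symmetry `π(x) = π(x')`.
-/

namespace IsPeriod

variable {q n : ℕ} {x : Fin n → Fin q} {p r s : ℕ}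

theorem apply_eq_of_add_eq (hp : IsPeriod x p) {i j : ℕ} (hi : i < n) (hj : j < n)
    (hij : i + p = j) : x ⟨i, hi⟩ = x ⟨j, hj⟩ := by
  subst hij
  exact hp.2 i hj

theorem tsub (hr : IsPeriod x r) (hs : IsPeriod x s) (hrs : r < s) (hn : r + s ≤ n) :
    IsPeriod x (s - r) := by
  refine ⟨by omega, fun i h => ?_⟩
  by_cases hi : i + s < n
  · exact (hs.apply_eq_of_add_eq _ hi rfl).trans
      (hr.apply_eq_of_add_eq (j := i + s) h hi (by omega)).symm
  · exact (hr.apply_eq_of_add_eq (i := i - r) (by omega) _ (by omega)).symm.trans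
      (hs.apply_eq_of_add_eq _ h (by omega))

/-- The weak Fine–Wilf theorem. -/
theorem gcd (hr : IsPeriod x r) (hs : IsPeriod x s) (hn : r + s ≤ n) :
    IsPeriod x (r.gcd s) := by
  induction h : r + s using Nat.strong_induction_on generalizing r s with
  | _ k ih =>
    have hr0 := hr.1
    have hs0 := hs.1
    rcases lt_trichotomy r s with hrs | rfl | hrs
    · have := ih (r + (s - r)) (by omega) hr (hr.tsub hs hrs hn) (by omega) rfl
      rwa [Nat.gcd_sub_self_right hrs.le] at this
    · rwa [Nat.gcd_self]
    · have := ih (r - s + s) (by omega) (hs.tsub hr hrs (by omega)) hs (by omega) rfl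
      rwa [Nat.gcd_sub_self_left hrs.le] at this

theorem apply_eq_of_add_mul_eq (hp : IsPeriod x p) (c : ℕ) {i j : ℕ} (hi : i < n) (hj : j < n)
    (hij : i + p * c = j) : x ⟨i, hi⟩ = x ⟨j, hj⟩ := by
  induction c generalizing j with
  | zero => exact congrArg x (Fin.ext (by simpa using hij))
  | succ c ih =>
    rw [Nat.mul_succ] at hij
    exact (ih (by omega) rfl).trans (hp.apply_eq_of_add_eq _ _ (by omega))

theorem apply_eq_of_modEq (hp : IsPeriod x p) {i j : ℕ} (hi : i < n) (hj : j < n)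
    (h : i ≡ j [MOD p]) : x ⟨i, hi⟩ = x ⟨j, hj⟩ := by
  wlog hij : i ≤ j generalizing i j
  · exact (this hj hi h.symm (by omega)).symm
  obtain ⟨c, hc⟩ := (Nat.modEq_iff_dvd' hij).mp h
  exact hp.apply_eq_of_add_mul_eq c hi hj (by omega)

end IsPeriod

section MinPeriod

variable {q n : ℕ} {x : Fin n → Fin q} {m : ℕ}

theorem isPeriod_minPeriod (h : IsPeriod x m) : IsPeriod x (minPeriod x) :=
  Nat.sInf_mem (s := {r | IsPeriod x r}) ⟨m, h⟩

theorem minPeriod_le (h : IsPeriod x m) : minPeriod x ≤ m :=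
  Nat.sInf_le h

theorem minPeriod_dvd (h : IsPeriod x m) (hm : 2 * m ≤ n + 1) : minPeriod x ∣ m := by
  have hp := isPeriod_minPeriod h
  rcases (minPeriod_le h).eq_or_lt with heq | hlt
  · rw [heq]
  · rw [← Nat.gcd_eq_left_iff_dvd]
    exact le_antisymm (Nat.le_of_dvd hp.1 (Nat.gcd_dvd_left _ _))
      (minPeriod_le (hp.gcd h (by omega)))

theorem isPeriod_of_forall_eq_apply_mod {y : Fin n → Fin q} {p s : ℕ} (hp : 0 < p)
    (h : ∀ j (hj : j < n) (hj' : (j + s) % p < n), x ⟨j, hj⟩ = y ⟨(j + s) % p, hj'⟩) :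
    IsPeriod x p := by
  refine ⟨hp, fun i hi => ?_⟩
  have hpn : p ≤ n := by omega
  calc x ⟨i, _⟩ = y ⟨(i + s) % p, (Nat.mod_lt _ hp).trans_le hpn⟩ := h _ _ _
    _ = y ⟨(i + p + s) % p, (Nat.mod_lt _ hp).trans_le hpn⟩ := by
      congr 2
      rw [Nat.add_right_comm, Nat.add_mod_right]
    _ = x ⟨i + p, hi⟩ := (h _ _ _).symm

end MinPeriod

theorem Multiset.pair_eq_pair {β : Type*} {a b c d : β}
    (h : ({a, b} : Multiset β) = {c, d}) : a = c ∧ b = d ∨ a = d ∧ b = c := by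
  rcases Multiset.cons_eq_cons.mp h with ⟨hac, hbd⟩ | ⟨-, cs, hb, hd⟩
  · exact Or.inl ⟨hac, Multiset.singleton_inj.mp hbd⟩
  · rw [Multiset.singleton_eq_cons_iff] at hb hd
    exact Or.inr ⟨hd.1.symm, hb.1⟩

section Window

variable {α : Type*} {n : ℕ}

def window (x : Fin n → α) (L i : ℕ) (h : i + L ≤ n) : Fin L → α :=
  fun k => x ⟨i + k, by omega⟩

def grams (x : Fin n → α) (L : ℕ) : Multiset (Fin L → α) :=
  ↑(List.ofFn fun i : Fin (n + 1 - L) => window x L i (by omega))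

theorem apply_eq_of_window_eq {x y : Fin n → α} {L i i' : ℕ} {hi : i + L ≤ n}
    {hi' : i' + L ≤ n} (h : window x L i hi = window y L i' hi') (k : ℕ) (hk : k < L)
    {j j' : ℕ} (hj : j < n) (hj' : j' < n) (hij : i + k = j) (hij' : i' + k = j') :
    x ⟨j, hj⟩ = y ⟨j', hj'⟩ := by
  subst hij hij'
  exact congrFun h ⟨k, hk⟩

theorem grams_eq_ofFn (x : Fin n → α) {L m : ℕ} (h : m + L = n + 1) :
    grams x L = ↑(List.ofFn fun i : Fin m => window x L i (by omega)) := by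
  obtain rfl : n + 1 - L = m := by omega
  rfl

theorem mem_grams {x : Fin n → α} {L : ℕ} {w : Fin L → α} :
    w ∈ grams x L ↔ ∃ i, ∃ h : i + L ≤ n, window x L i h = w := by
  simp only [grams, Multiset.mem_coe, List.mem_ofFn]
  exact ⟨fun ⟨i, hi⟩ => ⟨i, _, hi⟩, fun ⟨i, h, hi⟩ => ⟨⟨i, by omega⟩, hi⟩⟩

theorem grams_map_init (x : Fin n → α) {e m : ℕ} (h : m + e = n) :
    (grams x (e + 1)).map Fin.init = ↑(List.ofFn fun i : Fin m => window x e i (by omega)) := by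
  rw [grams_eq_ofFn x (m := m) (by omega), Multiset.map_coe, List.map_ofFn]
  rfl

theorem grams_map_tail (x : Fin n → α) {e m : ℕ} (h : m + e = n) :
    (grams x (e + 1)).map Fin.tail =
      ↑(List.ofFn fun i : Fin m => window x e (i + 1) (by omega)) := by
  rw [grams_eq_ofFn x (m := m) (by omega), Multiset.map_coe, List.map_ofFn]
  congr 2
  funext i k
  exact congrArg x (Fin.ext (by simp only [Fin.val_succ]; omega))

theorem grams_map_init_add_singleton (x : Fin n → α) {e m : ℕ} (h : m + e = n) :
    (grams x (e + 1)).map Fin.init + {window x e m (by omega)} =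
      window x e 0 (by omega) ::ₘ (grams x (e + 1)).map Fin.tail := by
  let W : Fin (m + 1) → Fin e → α := fun i => window x e i (by omega)
  calc _ = (↑(List.ofFn W) : Multiset (Fin e → α)) := by
        rw [grams_map_init x h, List.ofFn_succ', List.concat_eq_append, ← Multiset.coe_add]
        rfl
    _ = _ := by
        rw [grams_map_tail x h, List.ofFn_succ, Multiset.cons_coe]
        rfl

theorem profileVec_eq_count {q n ℓ : ℕ} (x : Fin n → Fin q) (z : Fin ℓ → Fin q) :
    profileVec q n ℓ x z = (grams x ℓ).count z := by
  rw [grams, ← Fin.univ_val_map, Multiset.count_map, ← Finset.filter_val, Finset.card_val,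
    Finset.card_filter, profileVec, Finset.card_filter, ← Fin.sum_univ_eq_sum_range]
  refine Finset.sum_congr rfl fun i _ => if_congr ⟨fun hz => ?_, ?_⟩ rfl rfl
  · funext k
    exact (hz k _).symm
  · rintro rfl k h
    rfl

theorem grams_eq_of_profileVec_eq {q n ℓ : ℕ} {x x' : Fin n → Fin q}
    (h : profileVec q n ℓ x = profileVec q n ℓ x') : grams x ℓ = grams x' ℓ :=
  Multiset.ext.mpr fun z => by rw [← profileVec_eq_count, ← profileVec_eq_count, h]

theorem window_eq_or_window_eq {x x' : Fin n → α} {e m : ℕ} (h : m + e = n)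
    (hg : grams x (e + 1) = grams x' (e + 1)) :
    (window x e 0 (by omega) = window x e m (by omega) ∧
        window x' e 0 (by omega) = window x' e m (by omega)) ∨
      (window x e 0 (by omega) = window x' e 0 (by omega) ∧
        window x e m (by omega) = window x' e m (by omega)) := by
  have hx := grams_map_init_add_singleton x h
  have hx' := grams_map_init_add_singleton x' h
  rw [hg, ← Multiset.singleton_add] at hx
  rw [← Multiset.singleton_add] at hx'
  set A := (grams x' (e + 1)).map Fin.init
  set B := (grams x' (e + 1)).map Fin.tail
  have hpair : ({window x e 0 (by omega), window x' e m (by omega)} : Multiset (Fin e → α)) =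
      {window x' e 0 (by omega), window x e m (by omega)} := by
    refine add_right_cancel (b := B) ?_
    simp only [Multiset.insert_eq_cons, ← Multiset.singleton_add]
    calc _ = A + {window x e m (by omega)} + {window x' e m (by omega)} := by
          rw [hx]; abel
      _ = A + {window x' e m (by omega)} + {window x e m (by omega)} := by abel
      _ = _ := by rw [hx']; abel
  rcases Multiset.pair_eq_pair hpair with ⟨h0, hm⟩ | ⟨h0, hm⟩
  · exact Or.inr ⟨h0, hm.symm⟩
  · exact Or.inl ⟨h0, hm.symm⟩

theorem isPeriod_of_window_eq {q : ℕ} {x : Fin n → Fin q} {e m : ℕ} (h : m + e = n) (hm : 0 < m)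
    (hw : window x e 0 (by omega) = window x e m (by omega)) : IsPeriod x m :=
  ⟨hm, fun i hi => apply_eq_of_window_eq hw i (by omega) _ _ (by omega) (by omega)⟩

theorem apply_eq_of_grams_eq_of_window_eq {x x' : Fin n → α} {e : ℕ} (h : e + 1 + e = n)
    (hg : grams x (e + 1) = grams x' (e + 1))
    (hw : window x e (e + 1) (by omega) = window x' e (e + 1) (by omega)) :
    x ⟨e, by omega⟩ = x' ⟨e, by omega⟩ := by
  have hlast : ∀ y : Fin n → α, (grams y (e + 1)).map (· (Fin.last e)) =
      y ⟨e, by omega⟩ ::ₘ ↑(List.ofFn fun i : Fin e => y ⟨i + 1 + e, by omega⟩) := by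
    intro y
    rw [grams_eq_ofFn y (m := e + 1) (by omega), Multiset.map_coe, List.map_ofFn,
      List.ofFn_succ, Multiset.cons_coe]
    simp [window]
  have htail : (List.ofFn fun i : Fin e => x ⟨i + 1 + e, by omega⟩) =
      List.ofFn fun i : Fin e => x' ⟨i + 1 + e, by omega⟩ := by
    congr 1
    funext i
    exact apply_eq_of_window_eq hw i (by omega) _ _ (by omega) (by omega)
  have := congrArg (Multiset.map (· (Fin.last e))) hg
  rwa [hlast, hlast, htail, Multiset.cons_inj_left] at this

theorem eq_of_window_eq {x x' : Fin n → α} {e m : ℕ} (h : m + e = n) (hme : m ≤ e + 1)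
    (hg : grams x (e + 1) = grams x' (e + 1))
    (h0 : window x e 0 (by omega) = window x' e 0 (by omega))
    (hm : window x e m (by omega) = window x' e m (by omega)) : x = x' := by
  funext ⟨j, hj⟩
  rcases (by omega : j < e ∨ m ≤ j ∨ (j = e ∧ m = e + 1)) with hje | hmj | ⟨rfl, rfl⟩
  · exact apply_eq_of_window_eq h0 j hje _ _ (by omega) (by omega)
  · exact apply_eq_of_window_eq hm (j - m) (by omega) _ _ (by omega) (by omega)
  · exact apply_eq_of_grams_eq_of_window_eq h hg hm

end Window

section Conjugate

variable {q n ℓ : ℕ} {x x' : Fin n → Fin q}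

theorem apply_eq_apply_mod_of_window_eq {m p s : ℕ} (hx' : IsPeriod x' m) (hp : IsPeriod x p)
    (hpm : p ∣ m) (hmℓ : m ≤ ℓ) {hs : s + ℓ ≤ n} {h0 : 0 + ℓ ≤ n}
    (hw : window x ℓ s hs = window x' ℓ 0 h0) (j : ℕ) (hj : j < n) (hj' : (j + s) % p < n) :
    x' ⟨j, hj⟩ = x ⟨(j + s) % p, hj'⟩ := by
  have hjm : j % m < m := Nat.mod_lt j hx'.1
  calc x' ⟨j, hj⟩ = x' ⟨j % m, by omega⟩ :=
        hx'.apply_eq_of_modEq _ _ (Nat.mod_modEq j m).symm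
    _ = x ⟨s + j % m, by omega⟩ :=
        (apply_eq_of_window_eq hw (j % m) (by omega) _ _ rfl (by omega)).symm
    _ = x ⟨(j + s) % p, hj'⟩ := by
        refine hp.apply_eq_of_modEq _ _ ?_
        rw [add_comm j]
        exact (((Nat.mod_modEq j m).of_dvd hpm).add_left s).trans (Nat.mod_modEq _ p).symm

theorem isPeriod_of_grams_eq (hℓn : ℓ ≤ n) (hn2 : n < 2 * ℓ) (hne : x ≠ x')
    (hg : grams x ℓ = grams x' ℓ) : IsPeriod x (n - ℓ + 1) ∧ IsPeriod x' (n - ℓ + 1) := by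
  obtain ⟨e, rfl⟩ : ∃ e, ℓ = e + 1 := ⟨ℓ - 1, by omega⟩
  have h : n - (e + 1) + 1 + e = n := by omega
  rcases window_eq_or_window_eq h hg with ⟨hx, hx'⟩ | ⟨h0, hm⟩
  · exact ⟨isPeriod_of_window_eq h (by omega) hx, isPeriod_of_window_eq h (by omega) hx'⟩
  · exact absurd (eq_of_window_eq h (by omega) hg h0 hm) hne

theorem exists_rotation_of_grams_eq (hℓn : ℓ ≤ n) (hn2 : n < 2 * ℓ) (hne : x ≠ x')
    (hg : grams x ℓ = grams x' ℓ) :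
    minPeriod x ∣ n - ℓ + 1 ∧ IsPeriod x' (minPeriod x) ∧
      ∃ s, ∀ j (hj : j < n) (hj' : (j + s) % minPeriod x < n),
        x' ⟨j, hj⟩ = x ⟨(j + s) % minPeriod x, hj'⟩ := by
  obtain ⟨hx, hx'⟩ := isPeriod_of_grams_eq hℓn hn2 hne hg
  have hdvd := minPeriod_dvd hx (by omega)
  have hp := isPeriod_minPeriod hx
  have hmem : window x' ℓ 0 (by omega) ∈ grams x ℓ := hg ▸ mem_grams.mpr ⟨0, _, rfl⟩
  obtain ⟨s, hs, hw⟩ := mem_grams.mp hmem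
  have hrot := apply_eq_apply_mod_of_window_eq hx' hp hdvd (by omega) hw
  exact ⟨hdvd, isPeriod_of_forall_eq_apply_mod hp.1 hrot, s, hrot⟩

end Conjugate

/-- If `ℓ ≤ n < 2ℓ` and distinct words `x, x'` have identical ℓ-gram profile
vectors, then they are root-conjugates (same minimum period, and the root of
`x` is a rotation of the root of `x'`) with `π(x) ∣ n - ℓ + 1`. -/
theorem stmt_2 (q n ℓ : ℕ) (hℓn : ℓ ≤ n) (hn2 : n < 2 * ℓ)
    (x x' : Fin n → Fin q) (hne : x ≠ x')
    (hprof : profileVec q n ℓ x = profileVec q n ℓ x') :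
    (minPeriod x = minPeriod x' ∧
      ∃ s : ℕ, ∀ i : ℕ, i < minPeriod x →
        ∀ (h1 : i < n) (h2 : (i + s) % minPeriod x < n),
          x ⟨i, h1⟩ = x' ⟨(i + s) % minPeriod x, h2⟩) ∧
    minPeriod x ∣ (n - ℓ + 1) := by
  have hg := grams_eq_of_profileVec_eq hprof
  obtain ⟨hdvd, hx', -⟩ := exists_rotation_of_grams_eq hℓn hn2 hne hg
  obtain ⟨-, hx, s, hs⟩ := exists_rotation_of_grams_eq hℓn hn2 hne.symm hg.symm
  have hmin : minPeriod x = minPeriod x' := (minPeriod_le hx).antisymm (minPeriod_le hx')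
  refine ⟨⟨hmin, s, ?_⟩, hdvd⟩
  rw [hmin]
  exact fun i _ => hs i
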